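/- arXiv:2604.25789 — 4 statements merged into one kernel-verified Lean document; each statement's English description precedes it below -/
import Mathlib

section
/- Let (M₁,≤₁),…,(M_t,≤_t) be cancellative ordered monoids and equip ∏ M_i with the lexicographic order. Let N be a monoid with maps g_i : N → M_i satisfying g_i(1) = 1, such that g = (g₁,…,g_t) : N → ∏ M_i is injective, and suppose there are maps h_i : (∏_{j<i} M_j)² → M_i (with h₁ constant equal to 1) such that g_i(wu) = h_i(g₁(w),…,g_{i-1}(w), g₁(u),…,g_{i-1}(u)) · g_i(w) · g_i(u) for all w, u ∈ N and all i. Then the order on N defined by w ≤_g w' iff g(w) ≤_lex g(w') makes (N, ≤_g) an ordered monoid. -/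
/-!
Pull the lexicographic order back along the injective map `w ↦ (g i w)ᵢ`; it is then automatically
a total order on `N`, and `1` is minimal because `g 1 = 1` is the least element coordinatewise.
For compatibility with multiplication, suppose `g w ≤ g w'` and `g u ≤ g u'` lexicographically and
let `i` be the first coordinate where `(g w, g u)` and `(g w', g u')` disagree. Below `i` the
coordinates of `g (w * u)` and `g (w' * u')` agree, and so do the twisting factors up to `i`, since
they only see coordinates below their index. At `i` one of the inequalities `g i w ≤ g i w'`,
`g i u ≤ g i u'` is strict, and cancellativity makes the product strictly larger.
-/

section TwistedMul

variable {ι : Type*} [LinearOrder ι] [WellFoundedLT ι] {M : ι → Type*}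
  [∀ i, Monoid (M i)] [∀ i, LinearOrder (M i)]

def twistedMul (h : ∀ i, (∀ j, M j) → (∀ j, M j) → M i) (x y : ∀ j, M j) : ∀ i, M i :=
  fun i => h i x y * x i * y i

variable [∀ i, MulLeftMono (M i)] [∀ i, MulRightMono (M i)] [∀ i, IsCancelMul (M i)]

theorem toLex_twistedMul_le_toLex_twistedMul (h : ∀ i, (∀ j, M j) → (∀ j, M j) → M i)
    (hdep : ∀ i a a' b b', (∀ j, j < i → a j = a' j ∧ b j = b' j) → h i a b = h i a' b')
    {x x' y y' : ∀ j, M j} (hx : toLex x ≤ toLex x') (hy : toLex y ≤ toLex y') :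
    toLex (twistedMul h x y) ≤ toLex (twistedMul h x' y') := by
  by_cases hdiff : ∃ i, x i ≠ x' i ∨ y i ≠ y' i
  swap
  · push Not at hdiff
    rw [funext fun j => (hdiff j).1, funext fun j => (hdiff j).2]
  obtain ⟨i, hi, hmin⟩ := wellFounded_lt.has_min {i | x i ≠ x' i ∨ y i ≠ y' i} hdiff
  have hbelow : ∀ j < i, x j = x' j ∧ y j = y' j := fun j hj =>
    not_or.mp (fun hne => hmin j hne hj) |>.imp not_not.mp not_not.mp
  have htwist : ∀ j ≤ i, h j x y = h j x' y' := fun j hj =>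
    hdep j _ _ _ _ fun k hk => hbelow k (hk.trans_le hj)
  have hxi : x i ≤ x' i := Pi.apply_le_of_toLex hx fun j hj => (hbelow j hj).1
  have hyi : y i ≤ y' i := Pi.apply_le_of_toLex hy fun j hj => (hbelow j hj).2
  have hprod : x i * y i < x' i * y' i := by
    rcases hi with hne | hne
    · exact mul_lt_mul_of_lt_of_le (hxi.lt_of_ne hne) hyi
    · exact mul_lt_mul_of_le_of_lt hxi (hyi.lt_of_ne hne)
  refine le_of_lt ⟨i, fun j hj => ?_, ?_⟩
  · change h j x y * x j * y j = h j x' y' * x' j * y' j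
    rw [htwist j hj.le, (hbelow j hj).1, (hbelow j hj).2]
  · change h i x y * x i * y i < h i x' y' * x' i * y' i
    rw [htwist i le_rfl, mul_assoc, mul_assoc]
    exact mul_lt_mul_right hprod _

end TwistedMul

theorem stmt_1_general {t : ℕ} {M : Fin t → Type*}
    [∀ i, Monoid (M i)] [∀ i, LinearOrder (M i)]
    (hone : ∀ i, ∀ a : M i, 1 ≤ a)
    (hmul : ∀ i, ∀ a b c d : M i, a ≤ b → c ≤ d → a * c ≤ b * d)
    (hlcancel : ∀ i, ∀ a b c : M i, a * b = a * c → b = c)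
    (hrcancel : ∀ i, ∀ a b c : M i, b * a = c * a → b = c)
    {N : Type*} [Monoid N]
    (g : ∀ i, N → M i)
    (hgone : ∀ i, g i 1 = 1)
    (hginj : Function.Injective (fun w : N => fun i => g i w))
    (h : ∀ i : Fin t, (∀ j : Fin t, M j) → (∀ j : Fin t, M j) → M i)
    (hdep : ∀ i : Fin t, ∀ a a' b b' : ∀ j, M j,
      (∀ j, j < i → a j = a' j ∧ b j = b' j) → h i a b = h i a' b')
    (hcompat : ∀ i : Fin t, ∀ w u : N,
      g i (w * u) = h i (fun j => g j w) (fun j => g j u) * g i w * g i u)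
    (le : N → N → Prop)
    (hle : ∀ w w', le w w' ↔
      toLex (fun i => g i w) ≤ toLex (fun i => g i w')) :
    (∀ w, le 1 w) ∧
    (∀ w w', le w w' ∨ le w' w) ∧
    (∀ w w', le w w' → le w' w → w = w') ∧
    (∀ w w' w'', le w w' → le w' w'' → le w w'') ∧
    (∀ w w' u u', le w w' → le u u' → le (w * u) (w' * u')) := by
  have _ : ∀ i, MulLeftMono (M i) := fun i => ⟨fun _ _ _ hbc => hmul i _ _ _ _ le_rfl hbc⟩
  have _ : ∀ i, MulRightMono (M i) := fun i => ⟨fun _ _ _ hbc => hmul i _ _ _ _ hbc le_rfl⟩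
  have _ : ∀ i, IsCancelMul (M i) := fun i =>
    { mul_left_cancel := fun a _ _ => hlcancel i a _ _
      mul_right_cancel := fun a _ _ => hrcancel i a _ _ }
  have hg_mul (w u : N) : (fun i => g i (w * u)) =
      twistedMul h (fun j => g j w) (fun j => g j u) := funext fun i => hcompat i w u
  simp only [hle]
  refine ⟨fun w => ?_, fun w w' => le_total _ _,
    fun w w' h₁ h₂ => hginj (toLex.injective (le_antisymm h₁ h₂)),
    fun w w' w'' => le_trans, fun w w' u u' hw hu => ?_⟩
  · exact Pi.toLex_monotone fun i => (hgone i).symm ▸ hone i _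
  · rw [hg_mul, hg_mul]
    exact toLex_twistedMul_le_toLex_twistedMul h hdep hw hu

/-- Lemma 2.3 ("Lemma g"): given cancellative ordered monoids `M i` (`i : Fin t`),
a monoid `N`, maps `g i : N → M i` with `g i 1 = 1` which are jointly injective,
and "twisting" maps `h i` depending only on the coordinates `j < i` with `h 0`
constantly `1`, satisfying
`g i (w * u) = h i (g · w) (g · u) * g i w * g i u`,
the pullback of the lexicographic order along `g` makes `N` an ordered monoid:
the identity is minimal and multiplication is order-preserving in both arguments
(the order being total, antisymmetric and transitive). -/
theorem stmt_1 {t : ℕ} (ht : 1 ≤ t) {M : Fin t → Type*}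
    [∀ i, Monoid (M i)] [∀ i, LinearOrder (M i)]
    (hone : ∀ i, ∀ a : M i, 1 ≤ a)
    (hmul : ∀ i, ∀ a b c d : M i, a ≤ b → c ≤ d → a * c ≤ b * d)
    (hlcancel : ∀ i, ∀ a b c : M i, a * b = a * c → b = c)
    (hrcancel : ∀ i, ∀ a b c : M i, b * a = c * a → b = c)
    {N : Type*} [Monoid N]
    (g : ∀ i, N → M i)
    (hgone : ∀ i, g i 1 = 1)
    (hginj : Function.Injective (fun w : N => fun i => g i w))
    (h : ∀ i : Fin t, (∀ j : Fin t, M j) → (∀ j : Fin t, M j) → M i)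
    (hdep : ∀ i : Fin t, ∀ a a' b b' : ∀ j, M j,
      (∀ j, j < i → a j = a' j ∧ b j = b' j) → h i a b = h i a' b')
    (h0 : ∀ a b, h ⟨0, ht⟩ a b = 1)
    (hcompat : ∀ i : Fin t, ∀ w u : N,
      g i (w * u) = h i (fun j => g j w) (fun j => g j u) * g i w * g i u)
    (le : N → N → Prop)
    (hle : ∀ w w', le w w' ↔
      toLex (fun i => g i w) ≤ toLex (fun i => g i w')) :
    (∀ w, le 1 w) ∧
    (∀ w w', le w w' ∨ le w' w) ∧
    (∀ w w', le w w' → le w' w → w = w') ∧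
    (∀ w w' w'', le w w' → le w' w'' → le w w'') ∧
    (∀ w w' u u', le w w' → le u u' → le (w * u) (w' * u')) :=
  stmt_1_general hone hmul hlcancel hrcancel g hgone hginj h hdep hcompat le hle
end

section
/- Let X be a finite totally ordered alphabet, τ : X → ℤ_{>0}, and σ₁,…,σ_s : X → ℤ_{≥0}. Define g : X* → ℤ_{≥0}^{1+2s} × X*_lex by g = (τ*, σ_s*, σ_s^#, σ_{s-1}*, σ_{s-1}^#, …, σ₁*, σ₁^#, id), and order X* by w ≤_g w' iff g(w) ≤ g(w') lexicographically (with X* in the last coordinate ordered lexicographically). Then (X*, ≤_g) is an ordered monoid. -/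
/-!
`g` is injective (its last coordinate is the word itself), so `≤_g` is the pullback of a
lexicographic total order and is itself a total order, with `[]` minimal since every key
vanishes on it. For compatibility with concatenation, `τ*` and `σ*` are additive, while
`σ^#(w u) = σ^#(w) + σ^#(u) + σ*(u) τ*(w)`. So when `w ≤_g w'` is decided at some key,
appending `u` on the right shifts that key and all earlier ones by amounts that depend on
`τ*(w) = τ*(w')` only, and prepending `w` on the left shifts them by amounts that depend on
`σ*(u) = σ*(u')` only; either way the comparison is unchanged. The final tie-break is
the lexicographic order, which is preserved on the right because positivity of `τ` and
`τ*(w) = τ*(w')` prevent `w` from being a proper prefix of `w'`.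
-/

/-- `σ*(w) = Σᵢ σ(aᵢ)`. -/
def sigmaStar {X : Type*} (σ : X → ℕ) (w : List X) : ℕ :=
  (w.map σ).sum

/-- `σ^#(w) = Σᵢ σ(aᵢ)·(τ(a₁)+⋯+τ(aᵢ))`. -/
def sigmaSharp {X : Type*} [Inhabited X] (τ σ : X → ℕ) (w : List X) : ℕ :=
  ∑ i ∈ Finset.range w.length, σ (w.getD i default) * sigmaStar τ (w.take (i + 1))

/-- Lexicographic comparison of words via a list of numerical keys, with a final
lexicographic tie-break on the words themselves. -/
def keysLe {X : Type*} [LinearOrder X] :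
    List (List X → ℕ) → List X → List X → Prop
  | [], w, w' => List.Lex (· < ·) w w' ∨ w = w'
  | k :: ks, w, w' => k w < k w' ∨ (k w = k w' ∧ keysLe ks w w')

/-- The order `≤_g` of the auxiliary lexicographic construction: compare
`(τ*, σ_s*, σ_s^#, σ_{s-1}*, σ_{s-1}^#, …, σ₁*, σ₁^#, id)` lexicographically. -/
def gLe {X : Type*} [Inhabited X] [LinearOrder X] (τ : X → ℕ) {s : ℕ}
    (σ : Fin s → X → ℕ) : List X → List X → Prop :=
  keysLe (sigmaStar τ ::
    (List.finRange s).reverse.flatMap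
      (fun j => [sigmaStar (σ j), sigmaSharp τ (σ j)]))

section Weights

variable {X : Type*}

lemma sigmaStar_append (σ : X → ℕ) (w u : List X) :
    sigmaStar σ (w ++ u) = sigmaStar σ w + sigmaStar σ u := by
  simp [sigmaStar]

lemma sigmaStar_singleton (σ : X → ℕ) (a : X) : sigmaStar σ [a] = σ a := by
  simp [sigmaStar]

lemma sigmaStar_pos_of_ne_nil {τ : X → ℕ} (hτ : ∀ a, 0 < τ a) {w : List X} (hw : w ≠ []) :
    0 < sigmaStar τ w := by
  obtain ⟨a, v, rfl⟩ := List.exists_cons_of_ne_nil hw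
  simpa [sigmaStar] using Nat.add_pos_left (hτ a) _

variable [Inhabited X]

lemma sigmaSharp_nil (τ σ : X → ℕ) : sigmaSharp τ σ [] = 0 := by
  simp [sigmaSharp]

lemma sigmaSharp_append_singleton (τ σ : X → ℕ) (w : List X) (a : X) :
    sigmaSharp τ σ (w ++ [a]) = sigmaSharp τ σ w + σ a * sigmaStar τ (w ++ [a]) := by
  rw [sigmaSharp, List.length_append, List.length_singleton, Finset.sum_range_succ, sigmaSharp]
  congr 1
  · refine Finset.sum_congr rfl fun i hi => ?_
    have hi : i < w.length := Finset.mem_range.mp hi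
    rw [List.getD_append _ _ _ _ hi, List.take_append_of_le_length hi]
  · simp [List.take_of_length_le]

lemma sigmaSharp_append (τ σ : X → ℕ) (w u : List X) :
    sigmaSharp τ σ (w ++ u) =
      sigmaSharp τ σ w + sigmaSharp τ σ u + sigmaStar σ u * sigmaStar τ w := by
  induction u using List.reverseRecOn with
  | nil => simp [sigmaSharp_nil, sigmaStar]
  | append_singleton u a ih =>
    rw [← List.append_assoc, sigmaSharp_append_singleton, sigmaSharp_append_singleton, ih]
    simp only [sigmaStar_append, sigmaStar_singleton]
    ring

end Weights

lemma List.Lex.append_right_of_sigmaStar_eq {X : Type*} [LinearOrder X] {τ : X → ℕ}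
    (hτ : ∀ a, 0 < τ a) {w w' : List X} (hlex : List.Lex (· < ·) w w')
    (heq : sigmaStar τ w = sigmaStar τ w') (u : List X) :
    List.Lex (· < ·) (w ++ u) (w' ++ u) := by
  induction hlex with
  | @nil b l =>
    exact absurd heq (sigmaStar_pos_of_ne_nil hτ (List.cons_ne_nil b l)).ne
  | cons _ ih =>
    simp only [sigmaStar, List.map_cons, List.sum_cons, Nat.add_left_cancel_iff] at heq
    exact .cons (ih heq)
  | rel hab => exact .rel hab

section KeysLe

variable {X : Type*}

/-- The map `g`, for an arbitrary list of numerical keys. -/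
def keyEmbedding (ks : List (List X → ℕ)) (w : List X) : Lex (List ℕ × List X) :=
  toLex (ks.map (· w), w)

lemma keyEmbedding_injective (ks : List (List X → ℕ)) : (keyEmbedding ks).Injective :=
  fun _ _ h => congrArg (·.2) (toLex.injective h)

variable [LinearOrder X]

lemma keysLe_iff_keyEmbedding_le (ks : List (List X → ℕ)) (w w' : List X) :
    keysLe ks w w' ↔ keyEmbedding ks w ≤ keyEmbedding ks w' := by
  induction ks with
  | nil =>
    simp only [keysLe, keyEmbedding, Prod.Lex.toLex_le_toLex, List.map_nil]
    simp [le_iff_lt_or_eq]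
  | cons k ks ih =>
    simp only [keysLe, ih, keyEmbedding, Prod.Lex.toLex_le_toLex, List.map_cons,
      List.cons_lt_cons_iff, List.cons.injEq]
    tauto

lemma keysLe_total (ks : List (List X → ℕ)) (w w' : List X) :
    keysLe ks w w' ∨ keysLe ks w' w := by
  simpa only [keysLe_iff_keyEmbedding_le] using le_total _ _

lemma keysLe_antisymm {ks : List (List X → ℕ)} {w w' : List X}
    (h : keysLe ks w w') (h' : keysLe ks w' w) : w = w' := by
  rw [keysLe_iff_keyEmbedding_le] at h h'
  exact keyEmbedding_injective ks (le_antisymm h h')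

lemma keysLe_trans {ks : List (List X → ℕ)} {w w' w'' : List X}
    (h : keysLe ks w w') (h' : keysLe ks w' w'') : keysLe ks w w'' := by
  rw [keysLe_iff_keyEmbedding_le] at h h' ⊢
  exact h.trans h'

lemma keysLe_nil_left {ks : List (List X → ℕ)} (hks : ∀ k ∈ ks, k [] = 0) (w : List X) :
    keysLe ks [] w := by
  induction ks with
  | nil => cases w <;> simp [keysLe]
  | cons k ks ih =>
    simp only [List.mem_cons, forall_eq_or_imp] at hks
    rcases Nat.eq_zero_or_pos (k w) with h | h
    · exact .inr ⟨by rw [hks.1, h], ih hks.2⟩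
    · exact .inl (hks.1 ▸ h)

lemma keysLe_cons_of_add_eq {k : List X → ℕ} {ks : List (List X → ℕ)} {w w' v v' : List X}
    (hk : k v + k w' = k w + k v') (hks : k w = k w' → keysLe ks w w' → keysLe ks v v')
    (h : keysLe (k :: ks) w w') : keysLe (k :: ks) v v' := by
  rcases h with h | ⟨he, h⟩
  · exact .inl (by omega)
  · exact .inr ⟨by omega, hks he h⟩

lemma keysLe_flatMap_pair_of_add_eq {ι : Type*} (α β : ι → List X → ℕ) (l : List ι)
    {w w' v v' : List X} (hα : ∀ j, α j v + α j w' = α j w + α j v')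
    (hβ : ∀ j, α j w = α j w' → β j v + β j w' = β j w + β j v')
    (hlex : keysLe [] w w' → keysLe [] v v')
    (h : keysLe (l.flatMap fun j => [α j, β j]) w w') :
    keysLe (l.flatMap fun j => [α j, β j]) v v' := by
  induction l with
  | nil => exact hlex h
  | cons j l ih =>
    simp only [List.flatMap_cons, List.cons_append, List.nil_append] at h ⊢
    exact keysLe_cons_of_add_eq (hα j) (fun hαj =>
      keysLe_cons_of_add_eq (hβ j hαj) fun _ => ih) h

end KeysLe

section GLe

variable {X : Type*} [Inhabited X] [LinearOrder X] (τ : X → ℕ) {s : ℕ} (σ : Fin s → X → ℕ)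

lemma gLe_nil_left (w : List X) : gLe τ σ [] w := by
  refine keysLe_nil_left (fun k hk => ?_) w
  simp only [List.mem_cons, List.mem_flatMap] at hk
  rcases hk with rfl | ⟨j, -, rfl | rfl | hk⟩
  · rfl
  · rfl
  · exact sigmaSharp_nil _ _
  · simp at hk

lemma gLe_append_right (hτ : ∀ a, 0 < τ a) {w w' : List X} (u : List X)
    (h : gLe τ σ w w') : gLe τ σ (w ++ u) (w' ++ u) := by
  refine keysLe_cons_of_add_eq (by simp only [sigmaStar_append]; ring) (fun hτw => ?_) h
  refine keysLe_flatMap_pair_of_add_eq _ _ _ (fun j => by simp only [sigmaStar_append]; ring)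
    (fun j _ => by simp only [sigmaSharp_append, hτw]; ring) ?_
  rintro (hlex | rfl)
  · exact .inl (hlex.append_right_of_sigmaStar_eq hτ hτw u)
  · exact .inr rfl

lemma gLe_append_left (w : List X) {u u' : List X}
    (h : gLe τ σ u u') : gLe τ σ (w ++ u) (w ++ u') := by
  refine keysLe_cons_of_add_eq (by simp only [sigmaStar_append]; ring) (fun _ => ?_) h
  refine keysLe_flatMap_pair_of_add_eq _ _ _ (fun j => by simp only [sigmaStar_append]; ring)
    (fun j hσu => by simp only [sigmaSharp_append, hσu]; ring) ?_
  rintro (hlex | rfl)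
  · exact .inl (hlex.append_left _ w)
  · exact .inr rfl

end GLe

theorem stmt_6_general {X : Type*} [Inhabited X] [LinearOrder X]
    (τ : X → ℕ) (hτ : ∀ a, 0 < τ a) {s : ℕ} (σ : Fin s → X → ℕ) :
    (∀ w : List X, gLe τ σ [] w) ∧
    (∀ w w' : List X, gLe τ σ w w' ∨ gLe τ σ w' w) ∧
    (∀ w w' : List X, gLe τ σ w w' → gLe τ σ w' w → w = w') ∧
    (∀ w w' w'' : List X, gLe τ σ w w' → gLe τ σ w' w'' → gLe τ σ w w'') ∧
    (∀ w w' u u' : List X, gLe τ σ w w' → gLe τ σ u u' →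
      gLe τ σ (w ++ u) (w' ++ u')) :=
  ⟨gLe_nil_left τ σ,
    fun _ _ => keysLe_total _ _ _,
    fun _ _ => keysLe_antisymm,
    fun _ _ _ => keysLe_trans,
    fun _ _ u _ hw hu => keysLe_trans (gLe_append_right τ σ hτ u hw) (gLe_append_left τ σ _ hu)⟩

/-- `(X*, ≤_g)` is an ordered monoid: `≤_g` is a total order, the empty word is
minimal and concatenation is order-preserving in both arguments. -/
theorem stmt_6 {X : Type*} [Inhabited X] [Fintype X] [LinearOrder X]
    (τ : X → ℕ) (hτ : ∀ a, 0 < τ a) {s : ℕ} (σ : Fin s → X → ℕ) :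
    (∀ w : List X, gLe τ σ [] w) ∧
    (∀ w w' : List X, gLe τ σ w w' ∨ gLe τ σ w' w) ∧
    (∀ w w' : List X, gLe τ σ w w' → gLe τ σ w' w → w = w') ∧
    (∀ w w' w'' : List X, gLe τ σ w w' → gLe τ σ w' w'' → gLe τ σ w w'') ∧
    (∀ w w' u u' : List X, gLe τ σ w w' → gLe τ σ u u' →
      gLe τ σ (w ++ u) (w' ++ u')) :=
  stmt_6_general τ hτ σ
end

section
/- Let X = Y₀ ⊔ Y₁ ⊔ ⋯ ⊔ Y_s be a partition of a finite alphabet into nonempty sets with s ≥ 1, and let k₀,…,k_s ≥ 1. Then every subset B of the set of words Y₀^{k₀} Y₁^{k₁} ⋯ Y_s^{k_s} (concatenations of k₀ letters from Y₀, then k₁ letters from Y₁, etc.) is combinatorially free: no word of B is a proper middle factor of another word of B, and no proper prefix of a word in B is a proper suffix of a word in B. -/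
/-- Every subset `B` of the set of words `Y₀^{k₀} Y₁^{k₁} ⋯ Y_s^{k_s}`
(concatenations of `k₀` letters from `Y₀`, then `k₁` letters from `Y₁`, etc.),
where the `Yⱼ` are nonempty and pairwise disjoint, `s ≥ 1` and all `kⱼ ≥ 1`,
is combinatorially free: no word of `B` is a proper middle factor of another word
of `B`, and no proper nonempty prefix of a word in `B` is a proper nonempty
suffix of a (possibly equal) word in `B`. -/
theorem stmt_8 {X : Type*} {s : ℕ} (hs : 1 ≤ s)
    (Y : Fin (s + 1) → Set X)
    (hY : ∀ j, (Y j).Nonempty)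
    (hdisj : ∀ j j' : Fin (s + 1), j ≠ j' → Disjoint (Y j) (Y j'))
    (k : Fin (s + 1) → ℕ) (hk : ∀ j, 1 ≤ k j)
    (B : Set (List X))
    (hB : ∀ w ∈ B, ∃ ws : Fin (s + 1) → List X,
      w = (List.ofFn ws).flatten ∧
      ∀ j, (ws j).length = k j ∧ ∀ a ∈ ws j, a ∈ Y j) :
    (∀ w₁ ∈ B, ∀ w₂ ∈ B, w₁ ≠ w₂ → ∀ a b : List X, w₂ ≠ a ++ w₁ ++ b) ∧
    (∀ w₁ ∈ B, ∀ w₂ ∈ B, ∀ u : List X,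
      u ≠ [] → u <+: w₁ → u ≠ w₁ → ¬(u <:+ w₂ ∧ u ≠ w₂)) := by
  obtain ⟨s, rfl⟩ : ∃ s', s = s' + 1 := ⟨s - 1, by omega⟩
  set L := ∑ j, k j with hL
  have hone : ((0 : Fin (s + 1)).succ : Fin (s + 1 + 1)) = 1 := Fin.succ_zero_eq_one
  have hk01 : k 0 + k 1 ≤ L := by
    have : L = k 0 + (k 1 + ∑ i : Fin s, k i.succ.succ) := by
      rw [hL, Fin.sum_univ_succ, Fin.sum_univ_succ, hone]
    omega
  have hk0L : k 0 < L := by have := hk 1; omega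
  -- length of every word of B
  have hlen : ∀ w ∈ B, w.length = L := by
    intro w hw
    obtain ⟨ws, rfl, hws⟩ := hB w hw
    simp only [List.length_flatten, List.map_ofFn, List.sum_ofFn, Function.comp]
    exact Finset.sum_congr rfl fun j _ => (hws j).1
  -- structure of letters
  have key : ∀ w ∈ B, ∀ p : ℕ, ∀ h : p < w.length,
      (p < k 0 → w[p] ∈ Y 0) ∧
      (k 0 ≤ p → ∃ j : Fin (s + 1 + 1), j ≠ 0 ∧ w[p] ∈ Y j) ∧
      (k 0 ≤ p → p < k 0 + k 1 → w[p] ∈ Y 1) := by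
    intro w hw p h
    obtain ⟨ws, rfl, hws⟩ := hB w hw
    have hdec : (List.ofFn ws).flatten
        = ws 0 ++ (ws 1 ++ (List.ofFn fun i : Fin s => ws i.succ.succ).flatten) := by
      rw [List.ofFn_succ, List.ofFn_succ]
      simp [hone]
    have h0 : (ws 0).length = k 0 := (hws 0).1
    have h1 : (ws 1).length = k 1 := (hws 1).1
    refine ⟨?_, ?_, ?_⟩
    · intro hp
      have : ((List.ofFn ws).flatten)[p] = (ws 0)[p]'(by omega) := by
        rw [List.getElem_of_eq hdec h, List.getElem_append_left]
      rw [this]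
      exact (hws 0).2 _ (List.getElem_mem _)
    · intro hp
      have hlt : p - k 0 < (ws 1 ++ (List.ofFn fun i : Fin s => ws i.succ.succ).flatten).length := by
        rw [hdec] at h; simp only [List.length_append] at h ⊢; omega
      have heq : ((List.ofFn ws).flatten)[p]
          = (ws 1 ++ (List.ofFn fun i : Fin s => ws i.succ.succ).flatten)[p - k 0]'hlt := by
        rw [List.getElem_of_eq hdec h, List.getElem_append_right (by omega)]
        congr 1; omega
      rw [heq]
      have hmem := List.getElem_mem hlt
      rw [List.mem_append] at hmem
      rcases hmem with hm | hm
      · exact ⟨1, by simp, (hws 1).2 _ hm⟩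
      · rw [List.mem_flatten] at hm
        obtain ⟨l, hl, hxl⟩ := hm
        rw [List.mem_ofFn] at hl
        obtain ⟨i, rfl⟩ := hl
        exact ⟨i.succ.succ, Fin.succ_ne_zero _, (hws i.succ.succ).2 _ hxl⟩
    · intro hp hp'
      have heq : ((List.ofFn ws).flatten)[p] = (ws 1)[p - k 0]'(by omega) := by
        rw [List.getElem_of_eq hdec h, List.getElem_append_right (by omega),
          List.getElem_append_left (by omega)]
        congr 1; omega
      rw [heq]
      exact (hws 1).2 _ (List.getElem_mem _)
  have h01 : (0 : Fin (s + 1 + 1)) ≠ 1 := by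
    intro h; exact absurd (congrArg Fin.val h) (by simp)
  constructor
  · intro w₁ h₁ w₂ h₂ hne a b hab
    have l1 := hlen w₁ h₁
    have l2 := hlen w₂ h₂
    have := congrArg List.length hab
    simp only [List.length_append, l1, l2] at this
    have ha : a = [] := List.length_eq_zero_iff.mp (by omega)
    have hb : b = [] := List.length_eq_zero_iff.mp (by omega)
    subst ha hb
    simp at hab
    exact hne hab.symm
  · rintro w₁ h₁ w₂ h₂ u hu hpre hneu ⟨hsuf, hneu2⟩
    obtain ⟨d, hd⟩ := hpre
    obtain ⟨c, hc⟩ := hsuf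
    have l1 := hlen w₁ h₁
    have l2 := hlen w₂ h₂
    have hm1 : 1 ≤ u.length := List.length_pos_iff.mpr hu
    have hmL : u.length < L := by
      have hle : u.length ≤ L := by rw [← l1, ← hd]; simp
      rcases lt_or_eq_of_le hle with h | h
      · exact h
      · exact absurd (List.IsPrefix.eq_of_length ⟨d, hd⟩ (by omega)) hneu
    have hclen : c.length = L - u.length := by
      have := congrArg List.length hc
      simp only [List.length_append, l2] at this; omega
    have hc1 : 1 ≤ c.length := by
      rcases Nat.eq_zero_or_pos c.length with h | h
      · exfalso; apply hneu2
        have : c = [] := List.length_eq_zero_iff.mp h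
        rw [this] at hc; simpa using hc
      · exact h
    -- get-equalities
    have hu1 : ∀ i (hi : i < u.length), u[i] = w₁[i]'(by rw [← hd]; simp; omega) := by
      intro i hi
      rw [List.getElem_of_eq hd.symm, List.getElem_append_left hi]
    have hu2 : ∀ i (hi : i < u.length),
        u[i] = w₂[c.length + i]'(by rw [← hc]; simp; omega) := by
      intro i hi
      rw [List.getElem_of_eq hc.symm, List.getElem_append_right (by omega)]
      congr 1; omega
    by_cases hcase : c.length < k 0
    · -- case B
      set i := k 0 - c.length with hi
      have hik : i < k 0 := by omega
      have him : i < u.length := by omega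
      have hx1 : u[i] ∈ Y 0 := by
        rw [hu1 i him]
        exact ((key w₁ h₁ i (by omega)).1) hik
      have hx2 : u[i] ∈ Y 1 := by
        rw [hu2 i him]
        have hki : c.length + i = k 0 := by omega
        have hk1 := hk 1
        exact (key w₂ h₂ (c.length + i) (by omega)).2.2 (by omega) (by omega)
      exact Set.disjoint_left.mp (hdisj 0 1 h01) hx1 hx2
    · -- case A
      have hx1 : u[0]'(by omega) ∈ Y 0 := by
        rw [hu1 0 (by omega)]
        exact ((key w₁ h₁ 0 (by omega)).1) (hk 0)
      obtain ⟨j, hj0, hxj⟩ := (key w₂ h₂ (c.length + 0) (by omega)).2.1 (by omega)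
      rw [← hu2 0 (by omega)] at hxj
      exact Set.disjoint_left.mp (hdisj 0 j (Ne.symm hj0)) hx1 hxj
end

section
/- Let K be a commutative ring and suppose ε_w : F → K (for words w over X) satisfy the Magnus coefficient identity ε_w(ff') = Σ_{w=uu'} ε_u(f)ε_{u'}(f') and ε_1(f) = 1 for the empty word. Then for every word w = (a₁⋯a_n), the map ρ_w : F → U_n(K) sending f to the (n+1)×(n+1) upper unitriangular matrix with (i,j)-entry ε_{(a_i⋯a_{j-1})}(f) for i < j (and 1 on the diagonal) is a group homomorphism. -/
/-- Let `ε_w : F → K` (for words `w` over `X`) satisfy the Magnus coefficient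
identity `ε_w(ff') = Σ_{w=uu'} ε_u(f)ε_{u'}(f')` and `ε_1(f) = 1` for the empty
word.  For a word `w = (a₁⋯aₙ)`, the map `ρ_w : F → U_n(K)` sending `f` to the
`(n+1)×(n+1)` upper unitriangular matrix with `(i,j)`-entry `ε_{(aᵢ⋯a_{j-1})}(f)`
for `i < j` is a group homomorphism. -/
theorem stmt_11 {X K F : Type*} [CommRing K] [Group F] {n : ℕ}
    (ε : F → List X → K)
    (hmul : ∀ f f' : F, ∀ w : List X,
      ε (f * f') w =
        ∑ i ∈ Finset.range (w.length + 1), ε f (w.take i) * ε f' (w.drop i))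
    (hconst : ∀ f, ε f [] = 1)
    (a : Fin n → X)
    (ρ : F → Matrix (Fin (n + 1)) (Fin (n + 1)) K)
    (hρ : ∀ f i j, ρ f i j =
      if (i : ℕ) < (j : ℕ) then
        ε f ((((List.ofFn a).drop (i : ℕ)).take ((j : ℕ) - (i : ℕ))))
      else if i = j then 1 else 0) :
    ∀ f f' : F, ρ (f * f') = ρ f * ρ f' := by
  intro f f'
  have hLlen : (List.ofFn a).length = n := by simp
  ext i j
  rw [Matrix.mul_apply, hρ]
  set G : ℕ → K := fun m =>
    (if (i : ℕ) < m then
        ε f (((List.ofFn a).drop (i : ℕ)).take (m - (i : ℕ)))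
      else if (i : ℕ) = m then 1 else 0) *
    (if m < (j : ℕ) then
        ε f' (((List.ofFn a).drop m).take ((j : ℕ) - m))
      else if m = (j : ℕ) then 1 else 0) with hG
  have hsum : (∑ x : Fin (n + 1), ρ f i x * ρ f' x j)
      = ∑ m ∈ Finset.range (n + 1), G m := by
    rw [← Fin.sum_univ_eq_sum_range G (n + 1)]
    refine Finset.sum_congr rfl fun k _ => ?_
    rw [hρ, hρ, hG]
    simp only [Fin.ext_iff]
  rw [hsum]
  rcases lt_trichotomy (i : ℕ) (j : ℕ) with hij | hij | hij
  · -- i < j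
    have hjn : (j : ℕ) ≤ n := Nat.lt_succ_iff.mp j.isLt
    have hlen : (((List.ofFn a).drop (i : ℕ)).take ((j : ℕ) - (i : ℕ))).length
        = (j : ℕ) - (i : ℕ) := by
      rw [List.length_take, List.length_drop, hLlen]
      exact min_eq_left (Nat.sub_le_sub_right hjn i)
    rw [if_pos hij, hmul, hlen]
    have hstep1 : (∑ m ∈ Finset.range (n + 1), G m)
        = ∑ m ∈ Finset.Ico (i : ℕ) ((j : ℕ) + 1), G m := by
      refine (Finset.sum_subset ?_ ?_).symm
      · intro m hm
        simp only [Finset.mem_Ico] at hm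
        simp only [Finset.mem_range]
        omega
      · intro m _ hm
        simp only [Finset.mem_Ico, not_and_or, not_le, not_lt] at hm
        rcases hm with hm | hm
        · simp only [hG]
          rw [if_neg (by omega : ¬ (i : ℕ) < m), if_neg (by omega : ¬ (i : ℕ) = m),
            zero_mul]
        · simp only [hG]
          rw [if_neg (by omega : ¬ m < (j : ℕ)), if_neg (by omega : ¬ m = (j : ℕ)),
            mul_zero]
    rw [hstep1, Finset.sum_Ico_eq_sum_range,
      show (j : ℕ) + 1 - (i : ℕ) = (j : ℕ) - (i : ℕ) + 1 by omega]
    refine Finset.sum_congr rfl ?_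
    intro t ht
    simp only [Finset.mem_range, Nat.lt_succ_iff] at ht
    have htake : (((List.ofFn a).drop (i : ℕ)).take ((j : ℕ) - (i : ℕ))).take t
        = ((List.ofFn a).drop (i : ℕ)).take t := by
      rw [List.take_take, min_eq_left ht]
    have hdrop : (((List.ofFn a).drop (i : ℕ)).take ((j : ℕ) - (i : ℕ))).drop t
        = ((List.ofFn a).drop ((i : ℕ) + t)).take ((j : ℕ) - ((i : ℕ) + t)) := by
      rw [List.drop_take, List.drop_drop]
      congr 1
      omega
    rw [htake, hdrop]
    simp only [hG]
    rcases Nat.eq_zero_or_pos t with ht0 | htpos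
    · subst ht0
      rw [if_neg (by omega : ¬ (i : ℕ) < (i : ℕ) + 0),
        if_pos (by omega : (i : ℕ) = (i : ℕ) + 0),
        if_pos (by omega : (i : ℕ) + 0 < (j : ℕ))]
      simp [hconst]
    · rw [if_pos (by omega : (i : ℕ) < (i : ℕ) + t),
        show (i : ℕ) + t - (i : ℕ) = t by omega]
      rcases eq_or_lt_of_le ht with hteq | htlt
      · rw [if_neg (by omega : ¬ (i : ℕ) + t < (j : ℕ)),
          if_pos (by omega : (i : ℕ) + t = (j : ℕ)),
          show (j : ℕ) - ((i : ℕ) + t) = 0 by omega]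
        simp [hconst]
      · rw [if_pos (by omega : (i : ℕ) + t < (j : ℕ))]
  · -- i = j
    have hij' : i = j := Fin.ext hij
    rw [if_neg (by omega : ¬ (i : ℕ) < (j : ℕ)), if_pos hij']
    rw [Finset.sum_eq_single (i : ℕ)]
    · have e1 : ¬ ((i : ℕ) < (i : ℕ)) := by omega
      have e2 : ¬ ((i : ℕ) < (j : ℕ)) := by omega
      simp [hG, e1, e2, hij]
    · intro m _ hm
      rcases lt_or_gt_of_ne hm with h | h
      · simp only [hG]
        rw [if_neg (by omega : ¬ (i : ℕ) < m), if_neg (by omega : ¬ (i : ℕ) = m),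
          zero_mul]
      · simp only [hG]
        rw [if_neg (by omega : ¬ m < (j : ℕ)), if_neg (by omega : ¬ m = (j : ℕ)),
          mul_zero]
    · intro h
      exact absurd (Finset.mem_range.mpr i.isLt) h
  · -- j < i
    have h2 : i ≠ j := by
      intro h; rw [h] at hij; omega
    rw [if_neg (by omega : ¬ (i : ℕ) < (j : ℕ)), if_neg h2]
    refine (Finset.sum_eq_zero ?_).symm
    intro m _
    rcases lt_or_ge m (i : ℕ) with h | h
    · simp only [hG]
      rw [if_neg (by omega : ¬ (i : ℕ) < m), if_neg (by omega : ¬ (i : ℕ) = m),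
        zero_mul]
    · simp only [hG]
      rw [if_neg (by omega : ¬ m < (j : ℕ)), if_neg (by omega : ¬ m = (j : ℕ)),
        mul_zero]
end
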